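/- arXiv:1307.0992 — 2 statements merged into one kernel-verified Lean document; each statement's English description precedes it below -/
import Mathlib

section
/- Any connected graph with infinitely many ends contains infinitely many pairwise edge-disjoint double rays. -/
/-!
Rays from different ends meet in only finitely many vertices. Hence, by connectedness, one can
choose rays `B₀ = F₀, B₁, B₂, …` recursively so that `Bₙ₊₁` starts on `B₀ ∪ ⋯ ∪ Bₙ`, never returns to
it, and eventually runs along `Fₙ₊₁`. Two of these rays share at most one vertex, so no edge.
Call `Bₙ` a child of `Bₘ` if `m < n` and `Bₙ` starts on `Bₘ`. If some `Bₘ` has infinitely many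
children, pass to children attached at non-decreasing positions of `Bₘ` and pair them up: each
pair, joined along the segment of `Bₘ` between their attachment points, is a double ray, and
these segments are disjoint. Otherwise the tree is finitely branching, and Kőnig's lemma gives an
infinite branch `B_{g 0}, B_{g 1}, …`; then `B_{g (2k+1)}`, continued along its parent `B_{g (2k)}`
from the attachment point on, are edge-disjoint double rays.
-/

open SimpleGraph

variable {V : Type*}

/-- A ray in `G`: an injective sequence of vertices with consecutive vertices adjacent. -/
def IsRay (G : SimpleGraph V) (f : ℕ → V) : Prop :=
  Function.Injective f ∧ ∀ n, G.Adj (f n) (f (n + 1))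

/-- A double ray in `G`: an injective two-way infinite sequence with consecutive
vertices adjacent. -/
def IsDoubleRay (G : SimpleGraph V) (f : ℤ → V) : Prop :=
  Function.Injective f ∧ ∀ n, G.Adj (f n) (f (n + 1))

/-- The edges used by a ray. -/
def rayEdges (f : ℕ → V) : Set (Sym2 V) := {e | ∃ n, e = s(f n, f (n + 1))}

/-- The edges used by a double ray. -/
def drEdges (f : ℤ → V) : Set (Sym2 V) := {e | ∃ n : ℤ, e = s(f n, f (n + 1))}

/-- Two rays are equivalent (belong to the same end) iff no finite vertex set
separates them: for every finite `S` there are tails of both rays avoiding `S`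
which are joined by a walk avoiding `S`. -/
def RayEquiv (G : SimpleGraph V) (f g : ℕ → V) : Prop :=
  ∀ S : Finset V, ∃ a b, (∀ i, a ≤ i → f i ∉ S) ∧ (∀ j, b ≤ j → g j ∉ S) ∧
    ∃ w : G.Walk (f a) (g b), ∀ v ∈ w.support, v ∉ S

/-- The forward ray of a double ray. -/
def drFwd (f : ℤ → V) : ℕ → V := fun n => f n

/-- The backward ray of a double ray. -/
def drBwd (f : ℤ → V) : ℕ → V := fun n => f (-(n : ℤ) - 1)

/-- The end (represented by the ray `R`) has vertex-degree exactly `k`: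
there are `k` pairwise vertex-disjoint rays equivalent to `R`, but not `k + 1`. -/
def EndVertexDegree (G : SimpleGraph V) (R : ℕ → V) (k : ℕ) : Prop :=
  (∃ F : Fin k → ℕ → V, (∀ i, IsRay G (F i) ∧ RayEquiv G R (F i)) ∧
      Pairwise fun i j => Disjoint (Set.range (F i)) (Set.range (F j))) ∧
  ¬ ∃ F : Fin (k + 1) → ℕ → V, (∀ i, IsRay G (F i) ∧ RayEquiv G R (F i)) ∧
      Pairwise fun i j => Disjoint (Set.range (F i)) (Set.range (F j))

variable {G : SimpleGraph V}

theorem IsRay.tail {f : ℕ → V} (hf : IsRay G f) (n : ℕ) : IsRay G fun k => f (n + k) :=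
  ⟨fun _ _ h => Nat.add_left_cancel (hf.1 h), fun k => hf.2 (n + k)⟩

theorem IsRay.exists_forall_ge_notMem {f : ℕ → V} (hf : IsRay G f) {S : Set V}
    (hS : (S ∩ Set.range f).Finite) : ∃ N, ∀ k, N ≤ k → f k ∉ S := by
  have hpre : (f ⁻¹' S).Finite := by
    simpa [Set.preimage_inter_range] using hS.preimage hf.1.injOn
  exact Filter.eventually_atTop.1 (Nat.cofinite_eq_atTop ▸ hpre.eventually_cofinite_notMem)

theorem finite_inter_range_of_not_rayEquiv {f g : ℕ → V} (hf : IsRay G f) (hg : IsRay G g)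
    (h : ¬ RayEquiv G f g) : (Set.range f ∩ Set.range g).Finite := by
  by_contra hinf
  refine h fun S => ?_
  obtain ⟨M, hM⟩ := hf.exists_forall_ge_notMem (S.finite_toSet.inter_of_left _)
  obtain ⟨N, hN⟩ := hg.exists_forall_ge_notMem (S.finite_toSet.inter_of_left _)
  obtain ⟨v, ⟨⟨a, rfl⟩, b, hb⟩, hv⟩ := (Set.Infinite.sdiff hinf
    (((Set.finite_Iio M).image f).union ((Set.finite_Iio N).image g))).nonempty
  have ha : M ≤ a := not_lt.1 fun ha => hv (.inl ⟨a, ha, rfl⟩)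
  have hb' : N ≤ b := not_lt.1 fun hb' => hv (.inr ⟨b, hb', hb⟩)
  refine ⟨a, b, fun i hi => hM i (ha.trans hi), fun j hj => hN j (hb'.trans hj),
    (Walk.nil : G.Walk (f a) (f a)).copy rfl hb.symm, ?_⟩
  simpa using hM a ha

def segAppend (f : ℕ → V) (a b : ℕ) (T : ℕ → V) (i : ℕ) : V :=
  if a + i < b then f (a + i) else T (a + i - b)

section segAppend

variable {f T : ℕ → V} {a b : ℕ}

theorem segAppend_zero (hab : a ≤ b) (hbT : f b = T 0) : segAppend f a b T 0 = f a := by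
  unfold segAppend
  split_ifs with h
  · rfl
  · rw [show a + 0 - b = 0 by omega, ← hbT, show b = a by omega]

theorem range_segAppend_subset :
    Set.range (segAppend f a b T) ⊆ f '' Set.Ico a b ∪ Set.range T := by
  rintro _ ⟨i, rfl⟩
  unfold segAppend
  split_ifs with h
  · exact .inl ⟨a + i, ⟨by omega, h⟩, rfl⟩
  · exact .inr ⟨_, rfl⟩

theorem rayEdges_segAppend_subset (hbT : f b = T 0) :
    rayEdges (segAppend f a b T) ⊆
      (fun p => s(f p, f (p + 1))) '' Set.Ico a b ∪ rayEdges T := by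
  rintro _ ⟨i, rfl⟩
  unfold segAppend
  by_cases h : a + i + 1 < b
  · rw [if_pos (by omega), if_pos (by omega)]
    exact .inl ⟨a + i, ⟨by omega, by omega⟩, rfl⟩
  by_cases h' : a + i < b
  · rw [if_pos h', if_neg (by omega), show a + (i + 1) - b = 0 by omega, ← hbT]
    exact .inl ⟨a + i, ⟨by omega, h'⟩, by rw [show b = a + i + 1 by omega]⟩
  · rw [if_neg h', if_neg (by omega)]
    exact .inr ⟨a + i - b, by rw [show a + (i + 1) - b = a + i - b + 1 by omega]⟩

theorem isRay_segAppend (hadj : ∀ p ∈ Set.Ico a b, G.Adj (f p) (f (p + 1)))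
    (hinj : Set.InjOn f (Set.Icc a b)) (hT : IsRay G T) (hbT : f b = T 0)
    (hmeet : ∀ p ∈ Set.Ico a b, f p ∉ Set.range T) : IsRay G (segAppend f a b T) := by
  refine ⟨fun i j hij => ?_, fun i => ?_⟩
  · unfold segAppend at hij
    split_ifs at hij with hi hj hj
    · have := hinj ⟨by omega, by omega⟩ ⟨by omega, by omega⟩ hij
      omega
    · exact absurd ⟨_, hij.symm⟩ (hmeet _ ⟨by omega, hi⟩)
    · exact absurd ⟨_, hij⟩ (hmeet _ ⟨by omega, hj⟩)
    · have := hT.1 hij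
      omega
  · unfold segAppend
    by_cases h : a + i + 1 < b
    · rw [if_pos (by omega), if_pos (by omega), ← add_assoc]
      exact hadj _ ⟨by omega, by omega⟩
    by_cases h' : a + i < b
    · rw [if_pos h', if_neg (by omega), show a + (i + 1) - b = 0 by omega, ← hbT]
      simpa [show b = a + i + 1 by omega] using hadj (a + i) ⟨by omega, h'⟩
    · rw [if_neg h', if_neg (by omega), show a + (i + 1) - b = a + i - b + 1 by omega]
      exact hT.2 _

end segAppend

def glueRays (L R : ℕ → V) (z : ℤ) : V :=
  if z < 0 then L z.natAbs else R z.toNat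

section glueRays

variable {L R : ℕ → V}

theorem isDoubleRay_glueRays (hL : IsRay G L) (hR : IsRay G R) (h0 : L 0 = R 0)
    (hmeet : ∀ i j, L i = R j → i = 0) : IsDoubleRay G (glueRays L R) := by
  refine ⟨fun z w hzw => ?_, fun z => ?_⟩
  · unfold glueRays at hzw
    split_ifs at hzw with hz hw hw
    · have := hL.1 hzw
      omega
    · have := hmeet _ _ hzw
      omega
    · have := hmeet _ _ hzw.symm
      omega
    · have := hR.1 hzw
      omega
  · unfold glueRays
    by_cases hz : z + 1 < 0
    · rw [if_pos (by omega), if_pos hz, show z.natAbs = (z + 1).natAbs + 1 by omega]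
      exact (hL.2 _).symm
    by_cases hz' : z < 0
    · rw [if_pos hz', if_neg hz, show z.natAbs = 0 + 1 by omega,
        show (z + 1).toNat = 0 by omega, ← h0]
      exact (hL.2 0).symm
    · rw [if_neg hz', if_neg hz, show (z + 1).toNat = z.toNat + 1 by omega]
      exact hR.2 _

theorem drEdges_glueRays_subset (h0 : L 0 = R 0) :
    drEdges (glueRays L R) ⊆ rayEdges L ∪ rayEdges R := by
  rintro _ ⟨z, rfl⟩
  unfold glueRays
  by_cases hz : z + 1 < 0
  · rw [if_pos (by omega), if_pos hz, show z.natAbs = (z + 1).natAbs + 1 by omega, Sym2.eq_swap]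
    exact .inl ⟨_, rfl⟩
  by_cases hz' : z < 0
  · rw [if_pos hz', if_neg hz, show z.natAbs = 0 + 1 by omega,
      show (z + 1).toNat = 0 by omega, ← h0, Sym2.eq_swap]
    exact .inl ⟨0, rfl⟩
  · rw [if_neg hz', if_neg hz, show (z + 1).toNat = z.toNat + 1 by omega]
    exact .inr ⟨_, rfl⟩

end glueRays

theorem SimpleGraph.Connected.exists_path_segment (hc : G.Connected) {A T : Set V} {a b : V}
    (ha : a ∈ A) (hb : b ∈ T) :
    ∃ (f : ℕ → V) (i j : ℕ), i ≤ j ∧ (∀ p ∈ Set.Ico i j, G.Adj (f p) (f (p + 1))) ∧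
      Set.InjOn f (Set.Icc i j) ∧ f i ∈ A ∧ f j ∈ T ∧ (∀ p ∈ Set.Ioc i j, f p ∉ A) ∧
      ∀ p ∈ Set.Ico i j, f p ∉ T := by
  classical
  obtain ⟨w⟩ := hc.preconnected a b
  set u := w.bypass
  have hT : ∃ j, u.getVert j ∈ T := ⟨u.length, by simpa using hb⟩
  set j := Nat.find hT
  set i := Nat.findGreatest (fun p => u.getVert p ∈ A) j
  have hj : j ≤ u.length := Nat.find_min' hT (by simpa using hb)
  refine ⟨u.getVert, i, j, Nat.findGreatest_le j, fun p hp => u.adj_getVert_succ (by grind),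
    (w.bypass_isPath.getVert_injOn).mono fun p hp => hp.2.trans hj,
    Nat.findGreatest_spec (P := fun p => u.getVert p ∈ A) (Nat.zero_le j) (by simpa using ha),
    Nat.find_spec hT,
    fun p hp => Nat.findGreatest_is_greatest hp.1 hp.2, fun p hp => Nat.find_min hT hp.2⟩

def IsAttachedRay (G : SimpleGraph V) (A : Set V) (R β : ℕ → V) : Prop :=
  IsRay G β ∧ β 0 ∈ A ∧ (∀ i, β i ∈ A → i = 0) ∧ (Set.range β \ Set.range R).Finite

theorem SimpleGraph.Connected.exists_isAttachedRay (hc : G.Connected) {A : Set V} (hA : A.Nonempty)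
    {R : ℕ → V} (hR : IsRay G R) (hfin : (A ∩ Set.range R).Finite) :
    ∃ β, IsAttachedRay G A R β := by
  obtain ⟨N, hN⟩ := hR.exists_forall_ge_notMem hfin
  obtain ⟨f, i, j, hij, hadj, hinj, hi, ⟨s, hs⟩, hA', hT'⟩ :=
    hc.exists_path_segment (T := Set.range fun k => R (N + k)) hA.some_mem ⟨0, rfl⟩
  set T := fun k => R (N + (s + k))
  have hT : IsRay G T := (hR.tail N).tail s
  have hbT : f j = T 0 := by simp [T, hs]
  have hTR : Set.range T ⊆ Set.range R := Set.range_subset_iff.2 fun k => ⟨_, rfl⟩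
  have hrange : Set.range (segAppend f i j T) ⊆ f '' Set.Ico i j ∪ Set.range T :=
    range_segAppend_subset
  have hray := isRay_segAppend hadj hinj hT hbT
    fun p hp ⟨k, hk⟩ => hT' p hp ⟨s + k, hk⟩
  refine ⟨_, hray, by rwa [segAppend_zero hij hbT], fun k hk => ?_,
    ((Set.finite_Ico i j).image f).subset ?_⟩
  · rcases hrange ⟨k, rfl⟩ with ⟨p, hp, hpk⟩ | ⟨m, hm⟩
    · have hpi : p = i := by
        by_contra hne
        exact hA' p ⟨lt_of_le_of_ne hp.1 (Ne.symm hne), hp.2.le⟩ (by rwa [hpk])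
      exact hray.1 (hpk.symm.trans (hpi ▸ (segAppend_zero hij hbT).symm))
    · exact absurd (hm ▸ hk) (hN _ (by omega))
  · intro v ⟨hv, hvR⟩
    exact (hrange hv).resolve_right fun h => hvR (hTR h)

theorem Relation.exists_seq_of_infinite_reflTransGen {α : Type*} {r : α → α → Prop} {a : α}
    (hfin : ∀ x, {y | r x y}.Finite) (hinf : {y | Relation.ReflTransGen r a y}.Infinite) :
    ∃ f : ℕ → α, f 0 = a ∧ ∀ j, r (f j) (f (j + 1)) := by
  have step : ∀ x : {x // {y | Relation.ReflTransGen r x y}.Infinite},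
      ∃ y : {y // {z | Relation.ReflTransGen r y z}.Infinite}, r x y := by
    rintro ⟨x, hx⟩
    by_contra! h
    refine hx (((Set.finite_singleton x).union ((hfin x).biUnion fun y hy =>
      Set.not_infinite.1 fun hy' => h ⟨y, hy'⟩ hy)).subset fun z hz => ?_)
    rcases Relation.ReflTransGen.cases_head hz with rfl | ⟨y, hxy, hyz⟩
    · exact .inl rfl
    · exact .inr (Set.mem_biUnion hxy hyz)
  choose next hnext using step
  let f : ℕ → {x // {y | Relation.ReflTransGen r x y}.Infinite} := fun j => next^[j] ⟨a, hinf⟩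
  exact ⟨fun j => f j, rfl, fun j => by
    simpa [f, Function.iterate_succ_apply'] using hnext (f j)⟩

theorem Set.Infinite.exists_injective_monotone_comp {C : Set ℕ} (hC : C.Infinite) (t : ℕ → ℕ) :
    ∃ c : ℕ → ℕ, Function.Injective c ∧ (∀ k, c k ∈ C) ∧ Monotone (t ∘ c) := by
  let e := hC.natEmbedding
  obtain ⟨g, hg⟩ := (wellQuasiOrdered_le (α := ℕ)).exists_monotone_subseq fun k => t (e k)
  exact ⟨fun k => e (g k), Subtype.val_injective.comp (e.injective.comp g.injective),
    fun k => (e (g k)).2, fun _ _ h => hg _ _ h⟩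

def IsChild (B : ℕ → ℕ → V) (m n : ℕ) : Prop :=
  m < n ∧ ∃ s, B m s = B n 0

structure IsRayTree (G : SimpleGraph V) (B : ℕ → ℕ → V) : Prop where
  isRay : ∀ n, IsRay G (B n)
  eq_zero_of_eq : ∀ {m n}, m < n → ∀ i j, B m i = B n j → j = 0
  exists_isChild : ∀ n, ∃ m, IsChild B m (n + 1)

def rayTreeEdge (B : ℕ → ℕ → V) (x : ℕ × ℕ) : Sym2 V :=
  s(B x.1 x.2, B x.1 (x.2 + 1))

namespace IsRayTree

variable {B : ℕ → ℕ → V}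

theorem injective_rayTreeEdge (hB : IsRayTree G B) : Function.Injective (rayTreeEdge B) := by
  rintro ⟨m, p⟩ ⟨n, q⟩ h
  simp only [rayTreeEdge, Sym2.eq_iff] at h
  rcases lt_trichotomy m n with hmn | rfl | hmn
  · rcases h with ⟨h1, h2⟩ | ⟨h1, h2⟩ <;>
      have := hB.eq_zero_of_eq hmn _ _ h1 <;> have := hB.eq_zero_of_eq hmn _ _ h2 <;> omega
  · have hpq : p = q := by
      rcases h with ⟨h1, -⟩ | ⟨h1, h2⟩
      · exact (hB.isRay m).1 h1
      · have := (hB.isRay m).1 h1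
        have := (hB.isRay m).1 h2
        omega
    rw [hpq]
  · rcases h with ⟨h1, h2⟩ | ⟨h1, h2⟩ <;>
      have := hB.eq_zero_of_eq hmn _ _ h1.symm <;> have := hB.eq_zero_of_eq hmn _ _ h2.symm <;>
      omega

theorem pairwise_disjoint_drEdges (hB : IsRayTree G B) {D : ℕ → ℤ → V}
    {S : ℕ → Set (ℕ × ℕ)} (hS : Pairwise fun i j => Disjoint (S i) (S j))
    (hD : ∀ k, drEdges (D k) ⊆ rayTreeEdge B '' S k) :
    Pairwise fun i j => Disjoint (drEdges (D i)) (drEdges (D j)) :=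
  fun _ _ hij => ((Set.disjoint_image_iff hB.injective_rayTreeEdge).2 (hS hij)).mono (hD _) (hD _)

theorem exists_doubleRay_of_isChild (hB : IsRayTree G B) {m n : ℕ} (h : IsChild B m n) :
    ∃ D, IsDoubleRay G D ∧ drEdges D ⊆ rayTreeEdge B '' ({m, n} ×ˢ Set.univ) := by
  obtain ⟨hmn, s, hs⟩ := h
  have h0 : B n 0 = B m (s + 0) := hs.symm
  refine ⟨glueRays (B n) fun k => B m (s + k),
    isDoubleRay_glueRays (hB.isRay n) ((hB.isRay m).tail s) h0
      fun i j hij => hB.eq_zero_of_eq hmn _ _ hij.symm,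
    (drEdges_glueRays_subset h0).trans ?_⟩
  rintro _ (⟨p, rfl⟩ | ⟨p, rfl⟩)
  · exact ⟨(n, p), by simp, rfl⟩
  · exact ⟨(m, s + p), by simp, rfl⟩

theorem exists_doubleRay_of_siblings (hB : IsRayTree G B) {m a b sa sb : ℕ} (hab : a ≠ b)
    (hs : sa ≤ sb) (ha : m < a) (hsa : B m sa = B a 0) (hb : m < b) (hsb : B m sb = B b 0) :
    ∃ D, IsDoubleRay G D ∧
      drEdges D ⊆ rayTreeEdge B '' ({a, b} ×ˢ Set.univ ∪ {m} ×ˢ Set.Ico sa sb) := by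
  have hmeet : ∀ p ∈ Set.Ico sa sb, B m p ∉ Set.range (B b) := by
    rintro p hp ⟨j, hj⟩
    obtain rfl := hB.eq_zero_of_eq hb _ _ hj.symm
    have := (hB.isRay m).1 (hsb.trans hj)
    exact hp.2.ne this.symm
  set Y := segAppend (B m) sa sb (B b)
  have hY := isRay_segAppend (fun p _ => (hB.isRay m).2 p) (hB.isRay m).1.injOn (hB.isRay b)
    hsb hmeet
  have hY0 : B a 0 = Y 0 := hsa.symm.trans (segAppend_zero hs hsb).symm
  have hrange : Set.range Y ⊆ B m '' Set.Ico sa sb ∪ Set.range (B b) := range_segAppend_subset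
  have hYmeet : ∀ i j, B a i = Y j → i = 0 := by
    intro i j hij
    rcases hrange ⟨j, rfl⟩ with ⟨p, -, hp⟩ | ⟨k, hk⟩
    · exact hB.eq_zero_of_eq ha _ _ (hp.trans hij.symm)
    rcases lt_or_gt_of_ne hab with h | h
    · obtain rfl := hB.eq_zero_of_eq h _ _ (hij.trans hk.symm)
      exact hB.eq_zero_of_eq ha _ _ (hsb.trans (hk.trans hij.symm))
    · exact hB.eq_zero_of_eq h _ _ (hk.trans hij.symm)
  refine ⟨glueRays (B a) Y, isDoubleRay_glueRays (hB.isRay a) hY hY0 hYmeet,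
    (drEdges_glueRays_subset hY0).trans ?_⟩
  rintro e (⟨p, rfl⟩ | he)
  · exact ⟨(a, p), by simp, rfl⟩
  rcases rayEdges_segAppend_subset hsb he with ⟨p, hp, rfl⟩ | ⟨p, rfl⟩
  · exact ⟨(m, p), .inr ⟨rfl, hp⟩, rfl⟩
  · exact ⟨(b, p), by simp, rfl⟩

theorem exists_doubleRays_of_comb (hB : IsRayTree G B) {m : ℕ} {c s : ℕ → ℕ}
    (hc : Function.Injective c) (hs : Monotone s) (hcs : ∀ k, m < c k ∧ B m (s k) = B (c k) 0) :
    ∃ D : ℕ → ℤ → V, (∀ k, IsDoubleRay G (D k)) ∧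
      Pairwise fun i j => Disjoint (drEdges (D i)) (drEdges (D j)) := by
  choose D hD hDE using fun k => hB.exists_doubleRay_of_siblings
    (hc.ne (show 2 * k ≠ 2 * k + 1 by omega)) (hs (show 2 * k ≤ 2 * k + 1 by omega))
    (hcs (2 * k)).1 (hcs (2 * k)).2 (hcs (2 * k + 1)).1 (hcs (2 * k + 1)).2
  refine ⟨D, hD, hB.pairwise_disjoint_drEdges ((pairwise_disjoint_on _).2 fun i j hij => ?_) hDE⟩
  have hcm : ∀ k, c k ≠ m := fun k => (hcs k).1.ne'
  have := hs (show 2 * i + 1 ≤ 2 * j by omega)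
  simp only [Set.disjoint_union_left, Set.disjoint_union_right, Set.disjoint_prod,
    Set.disjoint_insert_left, Set.disjoint_insert_right, Set.disjoint_singleton,
    Set.mem_insert_iff, Set.mem_singleton_iff, hc.eq_iff, Set.Ico_disjoint_Ico]
  exact ⟨⟨.inl ⟨by omega, by omega, hc.ne (by omega)⟩, .inl ⟨hcm _, (hcm _).symm⟩⟩,
    .inl ⟨hcm _, hcm _⟩, .inr (by omega)⟩

theorem exists_doubleRays_of_chain (hB : IsRayTree G B) {g : ℕ → ℕ}
    (hg : ∀ j, IsChild B (g j) (g (j + 1))) :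
    ∃ D : ℕ → ℤ → V, (∀ k, IsDoubleRay G (D k)) ∧
      Pairwise fun i j => Disjoint (drEdges (D i)) (drEdges (D j)) := by
  choose D hD hDE using fun k => hB.exists_doubleRay_of_isChild (hg (2 * k))
  have hmono : StrictMono g := strictMono_nat_of_lt_succ fun j => (hg j).1
  refine ⟨D, hD, hB.pairwise_disjoint_drEdges ((pairwise_disjoint_on _).2 fun i j hij =>
    Set.disjoint_prod.2 (.inl ?_)) hDE⟩
  simp only [Set.disjoint_insert_left, Set.disjoint_insert_right, Set.disjoint_singleton,
    Set.mem_insert_iff, Set.mem_singleton_iff, ne_eq, hmono.injective.eq_iff]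
  omega

theorem reflTransGen_isChild (hB : IsRayTree G B) (n : ℕ) :
    Relation.ReflTransGen (IsChild B) 0 n := by
  induction n using Nat.strong_induction_on with
  | _ n ih =>
    rcases n with _ | n
    · exact .refl
    · obtain ⟨m, hm⟩ := hB.exists_isChild n
      exact (ih m hm.1).tail hm

theorem exists_edgeDisjoint_doubleRays (hB : IsRayTree G B) :
    ∃ D : ℕ → ℤ → V, (∀ k, IsDoubleRay G (D k)) ∧
      Pairwise fun i j => Disjoint (drEdges (D i)) (drEdges (D j)) := by
  by_cases hfin : ∀ m, {n | IsChild B m n}.Finite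
  · obtain ⟨g, -, hg⟩ := Relation.exists_seq_of_infinite_reflTransGen hfin
      (Set.infinite_univ.mono fun n _ => hB.reflTransGen_isChild n)
    exact hB.exists_doubleRays_of_chain hg
  · obtain ⟨m, hm⟩ := not_forall.1 hfin
    choose! s hs using fun n (hn : IsChild B m n) => hn.2
    obtain ⟨c, hc, hcm, hsc⟩ := Set.Infinite.exists_injective_monotone_comp hm s
    exact hB.exists_doubleRays_of_comb hc hsc fun k => ⟨(hcm k).1, hs _ (hcm k)⟩

end IsRayTree

open Classical in
noncomputable def attachedRay (G : SimpleGraph V) (A : Set V) (R : ℕ → V) : ℕ → V :=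
  if h : ∃ β, IsAttachedRay G A R β then h.choose else R

theorem isAttachedRay_attachedRay {A : Set V} {R : ℕ → V} (h : ∃ β, IsAttachedRay G A R β) :
    IsAttachedRay G A R (attachedRay G A R) := by
  rw [attachedRay, dif_pos h]
  exact h.choose_spec

section rayTree

variable (G) (F : ℕ → ℕ → V)

noncomputable def rayTreeUnion : ℕ → Set V
  | 0 => Set.range (F 0)
  | n + 1 => rayTreeUnion n ∪ Set.range (attachedRay G (rayTreeUnion n) (F (n + 1)))

noncomputable def rayTree : ℕ → ℕ → V
  | 0 => F 0
  | n + 1 => attachedRay G (rayTreeUnion G F n) (F (n + 1))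

theorem rayTreeUnion_eq (n : ℕ) : rayTreeUnion G F n = ⋃ m ≤ n, Set.range (rayTree G F m) := by
  induction n with
  | zero => simp [rayTreeUnion, rayTree]
  | succ n ih => rw [Set.biUnion_le_succ, ← ih]; rfl

variable {G F}

theorem isAttachedRay_rayTree_succ (hc : G.Connected) (hF : ∀ i, IsRay G (F i))
    (hfin : Pairwise fun i j => (Set.range (F i) ∩ Set.range (F j)).Finite) {n : ℕ}
    (hn : (rayTreeUnion G F n \ ⋃ m ≤ n, Set.range (F m)).Finite) :
    IsAttachedRay G (rayTreeUnion G F n) (F (n + 1)) (rayTree G F (n + 1)) := by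
  refine isAttachedRay_attachedRay (hc.exists_isAttachedRay ?_ (hF (n + 1)) ?_)
  · rw [rayTreeUnion_eq]
    exact ⟨F 0 0, Set.mem_biUnion (Nat.zero_le n) ⟨0, rfl⟩⟩
  refine (hn.union ((Set.finite_Iic n).biUnion fun m hm =>
    hfin (show m ≠ n + 1 by simp at hm; omega))).subset ?_
  rintro v ⟨hv, hvF⟩
  by_cases hv' : v ∈ ⋃ m ≤ n, Set.range (F m)
  · obtain ⟨m, hm, hvm⟩ := Set.mem_iUnion₂.1 hv'
    exact .inr (Set.mem_biUnion hm ⟨hvm, hvF⟩)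
  · exact .inl ⟨hv, hv'⟩

theorem finite_rayTreeUnion_diff (hc : G.Connected) (hF : ∀ i, IsRay G (F i))
    (hfin : Pairwise fun i j => (Set.range (F i) ∩ Set.range (F j)).Finite) (n : ℕ) :
    (rayTreeUnion G F n \ ⋃ m ≤ n, Set.range (F m)).Finite := by
  induction n with
  | zero => simp [rayTreeUnion]
  | succ n ih =>
    refine (ih.union (isAttachedRay_rayTree_succ hc hF hfin ih).2.2.2).subset ?_
    rw [Set.biUnion_le_succ]
    rintro v ⟨hv | hv, hvF⟩
    · exact .inl ⟨hv, fun h => hvF (.inl h)⟩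
    · exact .inr ⟨hv, fun h => hvF (.inr h)⟩

theorem isRayTree_rayTree (hc : G.Connected) (hF : ∀ i, IsRay G (F i))
    (hfin : Pairwise fun i j => (Set.range (F i) ∩ Set.range (F j)).Finite) :
    IsRayTree G (rayTree G F) := by
  have hatt := fun n =>
    isAttachedRay_rayTree_succ hc hF hfin (finite_rayTreeUnion_diff hc hF hfin n)
  refine ⟨fun n => ?_, fun {m n} hmn i j hij => ?_, fun n => ?_⟩
  · cases n with
    | zero => exact hF 0
    | succ n => exact (hatt n).1
  · obtain ⟨n, rfl⟩ := Nat.exists_eq_add_of_lt hmn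
    refine (hatt (m + n)).2.2.1 j (hij ▸ ?_)
    rw [rayTreeUnion_eq]
    exact Set.mem_biUnion (show m ≤ m + n by omega) ⟨i, rfl⟩
  · have h0 := (hatt n).2.1
    rw [rayTreeUnion_eq] at h0
    obtain ⟨m, hm, i, hi⟩ := Set.mem_iUnion₂.1 h0
    exact ⟨m, by omega, i, hi⟩

end rayTree

/-- Any connected graph with infinitely many ends contains infinitely many
pairwise edge-disjoint double rays. -/
theorem stmt_5 (G : SimpleGraph V) (hc : G.Connected)
    (h : ∃ F : ℕ → ℕ → V, (∀ i, IsRay G (F i)) ∧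
      Pairwise fun i j => ¬ RayEquiv G (F i) (F j)) :
    ∃ F : ℕ → ℤ → V, (∀ i, IsDoubleRay G (F i)) ∧
      Pairwise fun i j => Disjoint (drEdges (F i)) (drEdges (F j)) := by
  obtain ⟨F, hF, hinequiv⟩ := h
  exact (isRayTree_rayTree hc hF fun i j hij =>
    finite_inter_range_of_not_rayEquiv (hF i) (hF j) (hinequiv hij)).exists_edgeDisjoint_doubleRays
end

section
/- Let G be a graph that is the union of an infinite set R of pairwise edge-disjoint rays such that any two rays in R intersect in infinitely many vertices, and let X be an infinite set of vertices of G. Then G contains an infinite family of pairwise edge-disjoint rays whose start vertices are distinct and all lie in X. -/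
open SimpleGraph

variable {V : Type*}

/-!
If some ray `f ∈ R` contains infinitely many vertices of `X`, choose further rays
`g₀, g₁, … ∈ R` and pairwise disjoint segments `f[nᵢ, mᵢ]` with `f nᵢ ∈ X` and `f mᵢ` the
last vertex of the segment on `gᵢ`. The segment followed by the tail of `gᵢ` from `f mᵢ`
is a ray; these rays are edge-disjoint since the segments are disjoint and the rays of `R`
are edge-disjoint. Otherwise every ray of `R` meets `X` finitely often, so `X` meets
infinitely many rays of `R`, and their tails from vertices of `X` do the job.
-/

variable {G : SimpleGraph V}

lemma IsRay.shift {f : ℕ → V} (hf : IsRay G f) (n : ℕ) : IsRay G (fun t => f (n + t)) :=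
  ⟨hf.1.comp (add_right_injective n), fun t => hf.2 (n + t)⟩

lemma rayEdges_shift_subset (f : ℕ → V) (n : ℕ) :
    rayEdges (fun t => f (n + t)) ⊆ rayEdges f := by
  rintro e ⟨t, rfl⟩
  exact ⟨n + t, rfl⟩

def pathEdges (p : ℕ → V) (ℓ : ℕ) : Set (Sym2 V) := {e | ∃ t < ℓ, e = s(p t, p (t + 1))}

lemma pathEdges_shift_subset (f : ℕ → V) (n ℓ : ℕ) :
    pathEdges (fun t => f (n + t)) ℓ ⊆ rayEdges f := by
  rintro e ⟨t, -, rfl⟩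
  exact ⟨n + t, rfl⟩

lemma disjoint_pathEdges_shift {f : ℕ → V} (hf : Function.Injective f) {n ℓ n' ℓ' : ℕ}
    (h : n + ℓ ≤ n') :
    Disjoint (pathEdges (fun t => f (n + t)) ℓ) (pathEdges (fun t => f (n' + t)) ℓ') := by
  rw [Set.disjoint_left]
  rintro e ⟨t, ht, rfl⟩ ⟨t', -, he⟩
  rcases Sym2.eq_iff.mp he with ⟨h₁, -⟩ | ⟨h₁, -⟩
  · have := hf h₁; omega
  · have := hf h₁; omega

/-- `g 0` is skipped: `g` is meant to start at `p ℓ`. -/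
def concatRay (p : ℕ → V) (ℓ : ℕ) (g : ℕ → V) : ℕ → V :=
  fun t => if t ≤ ℓ then p t else g (t - ℓ)

section concatRay

variable {p g : ℕ → V} {ℓ : ℕ}

lemma concatRay_of_le {t : ℕ} (h : t ≤ ℓ) : concatRay p ℓ g t = p t := if_pos h

lemma concatRay_of_lt {t : ℕ} (h : ℓ < t) : concatRay p ℓ g t = g (t - ℓ) :=
  if_neg (Nat.not_le.mpr h)

lemma concatRay_of_ge (hpg : p ℓ = g 0) {t : ℕ} (h : ℓ ≤ t) :
    concatRay p ℓ g t = g (t - ℓ) := by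
  rcases h.lt_or_eq with h | rfl
  · exact concatRay_of_lt h
  · rw [concatRay_of_le le_rfl, hpg, Nat.sub_self]

lemma isRay_concatRay (hp : Set.InjOn p (Set.Iic ℓ))
    (hpadj : ∀ t < ℓ, G.Adj (p t) (p (t + 1))) (hg : IsRay G g) (hpg : p ℓ = g 0)
    (hgp : ∀ s t, 0 < s → t ≤ ℓ → g s ≠ p t) :
    IsRay G (concatRay p ℓ g) := by
  refine ⟨fun a b hab => ?_, fun t => ?_⟩
  · rcases le_or_gt a ℓ with ha | ha <;> rcases le_or_gt b ℓ with hb | hb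
    · rw [concatRay_of_le ha, concatRay_of_le hb] at hab
      exact hp ha hb hab
    · rw [concatRay_of_le ha, concatRay_of_lt hb] at hab
      exact absurd hab.symm (hgp _ _ (by omega) ha)
    · rw [concatRay_of_lt ha, concatRay_of_le hb] at hab
      exact absurd hab (hgp _ _ (by omega) hb)
    · rw [concatRay_of_lt ha, concatRay_of_lt hb] at hab
      have := hg.1 hab; omega
  · rcases lt_or_ge t ℓ with ht | ht
    · rw [concatRay_of_le ht.le, concatRay_of_le ht]
      exact hpadj t ht
    · rw [concatRay_of_ge hpg ht, concatRay_of_ge hpg (by omega), Nat.sub_add_comm ht]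
      exact hg.2 _

lemma rayEdges_concatRay_subset (hpg : p ℓ = g 0) :
    rayEdges (concatRay p ℓ g) ⊆ pathEdges p ℓ ∪ rayEdges g := by
  rintro e ⟨t, rfl⟩
  rcases lt_or_ge t ℓ with ht | ht
  · left
    rw [concatRay_of_le ht.le, concatRay_of_le ht]
    exact ⟨t, ht, rfl⟩
  · right
    rw [concatRay_of_ge hpg ht, concatRay_of_ge hpg (by omega), Nat.sub_add_comm ht]
    exact ⟨t - ℓ, rfl⟩

end concatRay

lemma exists_disjoint_intervals {P : ℕ → ℕ → ℕ → Prop}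
    (h : ∀ i B, ∃ n m, B < n ∧ n ≤ m ∧ P i n m) :
    ∃ n m : ℕ → ℕ, (∀ i, n i ≤ m i ∧ P i (n i) (m i)) ∧ ∀ i j, i < j → m i < n j := by
  choose n m hBn hnm hP using h
  -- the `i`-th interval is chosen beyond `B i`, the end of the previous one
  let B : ℕ → ℕ := fun i => Nat.rec 0 (fun i b => m i b) i
  have hB : StrictMono B := strictMono_nat_of_lt_succ fun i =>
    (hBn i (B i)).trans_le (hnm i (B i))
  refine ⟨fun i => n i (B i), fun i => m i (B i), fun i => ⟨hnm i _, hP i _⟩,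
    fun i j hij => ?_⟩
  exact (hB.monotone (Nat.succ_le_of_lt hij)).trans_lt (hBn j (B j))

lemma exists_segment_to_last_meet {f g : ℕ → V} {X : Set V}
    (hg : Function.Injective g) (hX : (f ⁻¹' X).Infinite)
    (hfg : (Set.range f ∩ Set.range g).Infinite) (B : ℕ) :
    ∃ n m, B < n ∧ n ≤ m ∧ f n ∈ X ∧
      ∃ k, f m = g k ∧ ∀ s, k < s → g s ∉ f '' Set.Icc n m := by
  obtain ⟨n, hnX, hBn⟩ := hX.exists_gt B
  obtain ⟨m₀, ⟨-, k₀, hk₀⟩, hnm₀⟩ :=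
    (hfg.preimage Set.inter_subset_left : (f ⁻¹' _).Infinite).exists_gt n
  have hK : (g ⁻¹' (f '' Set.Icc n m₀)).Finite :=
    ((Set.finite_Icc n m₀).image f).preimage hg.injOn
  obtain ⟨k, ⟨m, hm, hmk⟩, hkmax⟩ :=
    hK.exists_maximal ⟨k₀, m₀, ⟨hnm₀.le, le_rfl⟩, hk₀.symm⟩
  refine ⟨n, m, hBn, hm.1, hnX, k, hmk, fun s hks hs => ?_⟩
  have := hkmax (Set.image_mono (Set.Icc_subset_Icc_right hm.2) hs) hks.le
  omega

lemma exists_edgeDisjoint_rays_of_infinite_inter {R : Set (ℕ → V)} {X : Set V} {f : ℕ → V}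
    (hfR : f ∈ R) (hXf : (X ∩ Set.range f).Infinite) (hRinf : R.Infinite)
    (hray : ∀ f ∈ R, IsRay G f)
    (hed : ∀ f ∈ R, ∀ g ∈ R, f ≠ g → Disjoint (rayEdges f) (rayEdges g))
    (hmeet : ∀ f ∈ R, ∀ g ∈ R, f ≠ g → (Set.range f ∩ Set.range g).Infinite) :
    ∃ F : ℕ → ℕ → V, (∀ i, IsRay G (F i) ∧ F i 0 ∈ X) ∧
      Function.Injective (fun i => F i 0) ∧
      Pairwise fun i j => Disjoint (rayEdges (F i)) (rayEdges (F j)) := by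
  have hf := hray f hfR
  let e := (hRinf.sdiff (Set.finite_singleton f)).natEmbedding
  let g : ℕ → ℕ → V := fun i => e i
  have hgR : ∀ i, g i ∈ R ∧ g i ≠ f := fun i => (e i).2
  have hginj : Function.Injective g := Subtype.coe_injective.comp e.injective
  obtain ⟨n, m, hseg, hlt⟩ := exists_disjoint_intervals fun i =>
    exists_segment_to_last_meet (hray _ (hgR i).1).1
      (hXf.preimage Set.inter_subset_right) (hmeet _ hfR _ (hgR i).1 (hgR i).2.symm)
  choose hnm hnX k hjoin havoid using hseg
  have hjoin' : ∀ i, f (n i + (m i - n i)) = g i (k i + 0) := fun i => by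
    rw [Nat.add_sub_cancel' (hnm i), hjoin i]; rfl
  let F : ℕ → ℕ → V := fun i =>
    concatRay (fun t => f (n i + t)) (m i - n i) (fun t => g i (k i + t))
  have hstart : ∀ i, F i 0 = f (n i) := fun i => concatRay_of_le (Nat.zero_le _)
  have hFedges : ∀ i, rayEdges (F i) ⊆
      pathEdges (fun t => f (n i + t)) (m i - n i) ∪ rayEdges (g i) := fun i =>
    (rayEdges_concatRay_subset (hjoin' i)).trans
      (Set.union_subset_union_right _ (rayEdges_shift_subset _ _))
  have hpath_ray : ∀ i j, Disjoint (pathEdges (fun t => f (n i + t)) (m i - n i))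
      (rayEdges (g j)) := fun i j =>
    (hed f hfR _ (hgR j).1 (hgR j).2.symm).mono_left (pathEdges_shift_subset _ _ _)
  refine ⟨F, fun i => ⟨?_, by rw [hstart]; exact (hnX i).1⟩, ?_, fun i j hij => ?_⟩
  · have := hnm i
    refine isRay_concatRay (hf.shift _).1.injOn (fun t _ => (hf.shift _).2 t)
      ((hray _ (hgR i).1).shift _) (hjoin' i) fun s t hs ht h =>
        havoid i (k i + s) (by omega) ⟨n i + t, ⟨by omega, by omega⟩, h.symm⟩
  · intro i j hij
    simp only [hstart] at hij
    exact (StrictMono.injective fun i j hij => (hnm i).trans_lt (hlt i j hij)) (hf.1 hij)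
  · have hrays := hed _ (hgR i).1 _ (hgR j).1 (hginj.ne hij)
    refine .mono (hFedges i) (hFedges j) (Set.disjoint_union_left.2
      ⟨Set.disjoint_union_right.2 ⟨?_, hpath_ray i j⟩,
       Set.disjoint_union_right.2 ⟨(hpath_ray j i).symm, hrays⟩⟩)
    rcases hij.lt_or_gt with h | h
    · exact disjoint_pathEdges_shift hf.1 (by have := hlt i j h; have := hnm i; omega)
    · exact (disjoint_pathEdges_shift hf.1 (by have := hlt j i h; have := hnm j; omega)).symm

lemma exists_edgeDisjoint_rays_of_finite_inter {R : Set (ℕ → V)} {X : Set V}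
    (hray : ∀ f ∈ R, IsRay G f)
    (hed : ∀ f ∈ R, ∀ g ∈ R, f ≠ g → Disjoint (rayEdges f) (rayEdges g))
    (hVu : ∀ v : V, ∃ f ∈ R, v ∈ Set.range f) (hX : X.Infinite)
    (hfin : ∀ f ∈ R, (X ∩ Set.range f).Finite) :
    ∃ F : ℕ → ℕ → V, (∀ i, IsRay G (F i) ∧ F i 0 ∈ X) ∧
      Function.Injective (fun i => F i 0) ∧
      Pairwise fun i j => Disjoint (rayEdges (F i)) (rayEdges (F j)) := by
  choose φ hφR ν hν using hVu
  have himg : (φ '' X).Infinite := fun himg => hX <|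
    Set.Finite.of_finite_fibers φ himg fun _ ⟨x, _, hx⟩ => (hfin _ (hφR x)).subset
      fun y ⟨hyX, (hy : φ y = _)⟩ => ⟨hyX, ν y, by rw [hx, ← hy, hν]⟩
  let e := himg.natEmbedding
  choose x hxX hxφ using fun i => (e i).2
  have hφx : Function.Injective (φ ∘ x) := fun i j h =>
    e.injective (Subtype.coe_injective ((hxφ i).symm.trans (h.trans (hxφ j))))
  refine ⟨fun i t => φ (x i) (ν (x i) + t), fun i => ⟨(hray _ (hφR _)).shift _, ?_⟩,
    fun i j h => hφx.of_comp ?_, fun i j hij => ?_⟩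
  · simpa [hν] using hxX i
  · simpa [hν] using h
  · exact (hed _ (hφR _) _ (hφR _) (hφx.ne hij)).mono
      (rayEdges_shift_subset _ _) (rayEdges_shift_subset _ _)

theorem stmt_9_general (G : SimpleGraph V) (R : Set (ℕ → V)) (X : Set V)
    (hRinf : R.Infinite) (hray : ∀ f ∈ R, IsRay G f)
    (hed : ∀ f ∈ R, ∀ g ∈ R, f ≠ g → Disjoint (rayEdges f) (rayEdges g))
    (hmeet : ∀ f ∈ R, ∀ g ∈ R, f ≠ g → (Set.range f ∩ Set.range g).Infinite)
    (hVu : ∀ v : V, ∃ f ∈ R, v ∈ Set.range f)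
    (hX : X.Infinite) :
    ∃ F : ℕ → ℕ → V, (∀ i, IsRay G (F i) ∧ F i 0 ∈ X) ∧
      Function.Injective (fun i => F i 0) ∧
      Pairwise fun i j => Disjoint (rayEdges (F i)) (rayEdges (F j)) := by
  by_cases hA : ∃ f ∈ R, (X ∩ Set.range f).Infinite
  · obtain ⟨f, hfR, hXf⟩ := hA
    exact exists_edgeDisjoint_rays_of_infinite_inter hfR hXf hRinf hray hed hmeet
  · push Not at hA
    exact exists_edgeDisjoint_rays_of_finite_inter hray hed hVu hX hA

/-- If `G` is the union of an infinite set `R` of pairwise edge-disjoint rays any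
two of which meet in infinitely many vertices, and `X` is an infinite vertex set,
then `G` contains infinitely many pairwise edge-disjoint rays starting at distinct
vertices of `X`. -/
theorem stmt_9 (G : SimpleGraph V) (R : Set (ℕ → V)) (X : Set V)
    (hRinf : R.Infinite) (hray : ∀ f ∈ R, IsRay G f)
    (hed : ∀ f ∈ R, ∀ g ∈ R, f ≠ g → Disjoint (rayEdges f) (rayEdges g))
    (hmeet : ∀ f ∈ R, ∀ g ∈ R, f ≠ g → (Set.range f ∩ Set.range g).Infinite)
    (hVu : ∀ v : V, ∃ f ∈ R, v ∈ Set.range f)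
    (hEu : ∀ e ∈ G.edgeSet, ∃ f ∈ R, e ∈ rayEdges f)
    (hX : X.Infinite) :
    ∃ F : ℕ → ℕ → V, (∀ i, IsRay G (F i) ∧ F i 0 ∈ X) ∧
      Function.Injective (fun i => F i 0) ∧
      Pairwise fun i j => Disjoint (rayEdges (F i)) (rayEdges (F j)) :=
  stmt_9_general G R X hRinf hray hed hmeet hVu hX
end
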